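/- Let A ∈ (0,1), γ ∈ (0,1), |ψ⟩ = √((1+A)/2)|01⟩ + i√((1−A)/2)|10⟩, ρ = |ψ⟩⟨ψ|, and let ε = ε_AD ⊗ ε_AD be the two-qubit amplitude damping channel with Kraus operators Mₐ ⊗ M_b (a,b ∈ {0,1}), where M₀ = diag(1, √(1−γ)) and M₁ = [[0, √γ],[0,0]]. Then F_r(ρ) − F_r(ε(ρ)) = −((1+A)/2)log₂(1+A) − ((1−A)/2)log₂(1−A) − (1−γ)log₂(1−γ) + γ + ((1−γ)(1+A)/2)·log₂((1−γ)(1+A)) + ((1−γ)(1−A)/2)·log₂((1−γ)(1−A)). -/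

import Mathlib

open Matrix Kronecker BigOperators
open scoped ComplexOrder

noncomputable section

/-- A density matrix: positive semidefinite with trace 1. -/
def IsDensityMatrix {n : Type*} [Fintype n] [DecidableEq n] (ρ : Matrix n n ℂ) : Prop :=
  ρ.PosSemidef ∧ ρ.trace = 1

/-- The l₁-norm imaginarity measure: sum of |Im ρᵢⱼ| over off-diagonal entries. -/
noncomputable def Fl1 {n : Type*} [Fintype n] [DecidableEq n] (ρ : Matrix n n ℂ) : ℝ :=
  ∑ i, ∑ j, if i = j then 0 else |(ρ i j).im|

/-- The trace norm ‖M‖₁ = Tr √(M†M). -/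
noncomputable def traceNorm {n : Type*} [Fintype n] [DecidableEq n] (M : Matrix n n ℂ) : ℝ :=
  (((Matrix.posSemidef_conjTranspose_mul_self M).1.eigenvectorUnitary.1 *
    diagonal ((fun x : ℝ => (x : ℂ)) ∘ (Real.sqrt ·) ∘ (Matrix.posSemidef_conjTranspose_mul_self M).1.eigenvalues) *
    (star (Matrix.posSemidef_conjTranspose_mul_self M).1.eigenvectorUnitary :
      Matrix n n ℂ)).trace).re

/-- The robustness of imaginarity: (1/2)‖ρ − ρᵀ‖₁. -/
noncomputable def FR {n : Type*} [Fintype n] [DecidableEq n] (ρ : Matrix n n ℂ) : ℝ :=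
  traceNorm (ρ - ρᵀ) / 2

/-- Von Neumann entropy (base-2), via eigenvalues of a Hermitian matrix
(junk value 0 if not Hermitian). -/
noncomputable def vnEntropy {n : Type*} [Fintype n] [DecidableEq n] (σ : Matrix n n ℂ) : ℝ :=
  if h : σ.IsHermitian then -∑ j, (h.eigenvalues j) * Real.logb 2 (h.eigenvalues j) else 0

/-- The relative entropy of imaginarity: S(Re ρ) − S(ρ), Re ρ = (ρ + ρᵀ)/2. -/
noncomputable def Fr {n : Type*} [Fintype n] [DecidableEq n] (ρ : Matrix n n ℂ) : ℝ :=
  vnEntropy ((1/2 : ℂ) • (ρ + ρᵀ)) - vnEntropy ρ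

/-- The canonical single-qubit state ρ_A. -/
noncomputable def rhoA (A : ℝ) : Matrix (Fin 2) (Fin 2) ℂ :=
  !![(((1 + A) / 2 : ℝ) : ℂ), -(Complex.I / 2) * (Real.sqrt (1 - A ^ 2) : ℂ);
     (Complex.I / 2) * (Real.sqrt (1 - A ^ 2) : ℂ), (((1 - A) / 2 : ℝ) : ℂ)]

/-- Density matrix of the maximal imaginary state |+⟩ = (|0⟩ + i|1⟩)/√2. -/
noncomputable def Mplus : Matrix (Fin 2) (Fin 2) ℂ :=
  (1/2 : ℂ) • !![1, -Complex.I; Complex.I, 1]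

/-- The dual-rail two-qubit state √((1+A)/2)|01⟩ + i√((1−A)/2)|10⟩. -/
noncomputable def dualRail (A : ℝ) : Fin 2 × Fin 2 → ℂ := fun q =>
  if q = ((0 : Fin 2), (1 : Fin 2)) then (Real.sqrt ((1 + A) / 2) : ℂ)
  else if q = ((1 : Fin 2), (0 : Fin 2)) then Complex.I * (Real.sqrt ((1 - A) / 2) : ℂ)
  else 0

/-- Single-qubit amplitude damping Kraus operators. -/
noncomputable def adKraus (γ : ℝ) : Fin 2 → Matrix (Fin 2) (Fin 2) ℂ :=
  ![!![1, 0; 0, (Real.sqrt (1 - γ) : ℂ)], !![0, (Real.sqrt γ : ℂ); 0, 0]]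

/-- The two-qubit channel ε_AD ⊗ ε_AD. -/
noncomputable def adTensor (γ : ℝ) (ρ : Matrix (Fin 2 × Fin 2) (Fin 2 × Fin 2) ℂ) :
    Matrix (Fin 2 × Fin 2) (Fin 2 × Fin 2) ℂ :=
  ∑ a : Fin 2, ∑ b : Fin 2,
    (adKraus γ a ⊗ₖ adKraus γ b) * ρ * (adKraus γ a ⊗ₖ adKraus γ b)ᴴ

/-!
The state `ρ = |ψ⟩⟨ψ|` is pure, and since `ψ` carries a single excitation the channel sends it to
`γ |00⟩⟨00| + (1 - γ) |ψ⟩⟨ψ|`. Both states are diagonal in the orthonormal frame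
`|00⟩, ψ, ψ⊥, |11⟩`, while their real parts are diagonal in the computational basis, so all four
entropies are read off from explicit spectra; the spectrum of a conjugate `U D U†` is found through
its characteristic polynomial.
-/

section Spectrum

variable {n : Type*} [Fintype n] [DecidableEq n]

open Polynomial in
lemma Matrix.IsHermitian.sum_eigenvalues_eq_of_charpoly_eq {σ : Matrix n n ℂ}
    (hσ : σ.IsHermitian) {d : n → ℝ} (hd : σ.charpoly = ∏ i, (X - C (d i : ℂ))) (f : ℝ → ℝ) :
    ∑ j, f (hσ.eigenvalues j) = ∑ i, f (d i) := by
  have hroots := hσ.roots_charpoly_eq_eigenvalues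
  rw [hd, roots_prod _ _ (monic_prod_of_monic _ _ fun i _ => monic_X_sub_C _).ne_zero] at hroots
  simp only [roots_X_sub_C, Multiset.bind_singleton] at hroots
  have h := congrArg (fun m : Multiset ℂ => (m.map fun z => f z.re).sum) hroots
  simp only [Multiset.map_map, Function.comp_def] at h
  exact h.symm

lemma vnEntropy_unitary_conj_diagonal {U : Matrix n n ℂ} (hU : U ∈ unitaryGroup n ℂ)
    (d : n → ℝ) :
    vnEntropy (U * diagonal (fun i => (d i : ℂ)) * Uᴴ) = -∑ i, d i * Real.logb 2 (d i) := by
  have hherm : (U * diagonal (fun i => (d i : ℂ)) * Uᴴ).IsHermitian :=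
    isHermitian_mul_mul_conjTranspose U (isHermitian_diagonal_of_self_adjoint _ (by ext; simp))
  have hcharpoly : (U * diagonal (fun i => (d i : ℂ)) * Uᴴ).charpoly
      = ∏ i, (Polynomial.X - Polynomial.C (d i : ℂ)) := by
    rw [charpoly_mul_comm, ← mul_assoc, ← star_eq_conjTranspose, Unitary.star_mul_self_of_mem hU,
      one_mul, charpoly_diagonal]
  rw [vnEntropy, dif_pos hherm,
    hherm.sum_eigenvalues_eq_of_charpoly_eq hcharpoly fun x => x * Real.logb 2 x]

lemma vnEntropy_diagonal (d : n → ℝ) :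
    vnEntropy (diagonal fun i => (d i : ℂ)) = -∑ i, d i * Real.logb 2 (d i) := by
  simpa using vnEntropy_unitary_conj_diagonal (one_mem (unitaryGroup n ℂ)) d

end Spectrum

lemma div_two_mul_logb_div_two (x : ℝ) :
    x / 2 * Real.logb 2 (x / 2) = x / 2 * Real.logb 2 x - x / 2 := by
  rcases eq_or_ne x 0 with rfl | hx
  · simp
  · rw [Real.logb_div hx two_ne_zero, Real.logb_self_eq_one one_lt_two]
    ring

section DualRail

open Complex

/-- A diagonal two-qubit matrix, its weights on `|00⟩, |01⟩, |10⟩, |11⟩` laid out as a `2 × 2` grid. -/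
def gridDiagonal (w : Matrix (Fin 2) (Fin 2) ℝ) : Matrix (Fin 2 × Fin 2) (Fin 2 × Fin 2) ℂ :=
  diagonal fun q => (w q.1 q.2 : ℂ)

def dualRailVec (a b : ℝ) : Fin 2 × Fin 2 → ℂ := fun q => !![0, (a : ℂ); I * b, 0] q.1 q.2

/-- Columns `|00⟩, a|01⟩ + ib|10⟩, ib|01⟩ + a|10⟩, |11⟩` (`finProdFinEquiv` enumerates
`Fin 2 × Fin 2` lexicographically). -/
def dualRailFrame (a b : ℝ) : Matrix (Fin 2 × Fin 2) (Fin 2 × Fin 2) ℂ :=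
  reindex finProdFinEquiv.symm finProdFinEquiv.symm
    !![1, 0, 0, 0;
       0, a, I * b, 0;
       0, I * b, a, 0;
       0, 0, 0, 1]

/-- `x |00⟩⟨00| + y |ψ⟩⟨ψ|` for `ψ = a|01⟩ + ib|10⟩`. -/
def dualRailMixture (a b x y : ℝ) : Matrix (Fin 2 × Fin 2) (Fin 2 × Fin 2) ℂ :=
  dualRailFrame a b * gridDiagonal !![x, y; 0, 0] * (dualRailFrame a b)ᴴ

lemma dualRail_eq_dualRailVec (A : ℝ) :
    dualRail A = dualRailVec √((1 + A) / 2) √((1 - A) / 2) := by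
  ext ⟨q₁, q₂⟩
  fin_cases q₁ <;> fin_cases q₂ <;> simp [dualRail, dualRailVec]

lemma dualRailFrame_mem_unitaryGroup {a b : ℝ} (hab : a ^ 2 + b ^ 2 = 1) :
    dualRailFrame a b ∈ unitaryGroup (Fin 2 × Fin 2) ℂ := by
  have hab' : (a : ℂ) ^ 2 + (b : ℂ) ^ 2 = 1 := by exact_mod_cast hab
  rw [mem_unitaryGroup_iff]
  ext ⟨i₁, i₂⟩ ⟨j₁, j₂⟩
  fin_cases i₁ <;> fin_cases i₂ <;> fin_cases j₁ <;> fin_cases j₂ <;>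
    simp [dualRailFrame, mul_apply, Fintype.sum_prod_type, finProdFinEquiv] <;>
    grind [I_sq]

lemma pure_dualRailVec_eq_dualRailMixture (a b : ℝ) :
    (Matrix.of fun i j => dualRailVec a b i * (starRingEnd ℂ) (dualRailVec a b j))
      = dualRailMixture a b 0 1 := by
  ext ⟨i₁, i₂⟩ ⟨j₁, j₂⟩
  fin_cases i₁ <;> fin_cases i₂ <;> fin_cases j₁ <;> fin_cases j₂ <;>
    simp [dualRailVec, dualRailMixture, dualRailFrame, gridDiagonal, mul_apply,
      Fintype.sum_prod_type, finProdFinEquiv]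

lemma adTensor_pure_dualRailVec {a b γ : ℝ} (hab : a ^ 2 + b ^ 2 = 1) (hγ₀ : 0 ≤ γ)
    (hγ₁ : γ ≤ 1) :
    adTensor γ (Matrix.of fun i j => dualRailVec a b i * (starRingEnd ℂ) (dualRailVec a b j))
      = dualRailMixture a b γ (1 - γ) := by
  have hab' : (a : ℂ) ^ 2 + (b : ℂ) ^ 2 = 1 := by exact_mod_cast hab
  have hs : ((√γ : ℝ) : ℂ) ^ 2 = γ := by rw [← ofReal_pow, Real.sq_sqrt hγ₀]
  have hg : ((√(1 - γ) : ℝ) : ℂ) ^ 2 = 1 - γ := by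
    rw [← ofReal_pow, Real.sq_sqrt (sub_nonneg.mpr hγ₁), ofReal_sub, ofReal_one]
  ext ⟨i₁, i₂⟩ ⟨j₁, j₂⟩
  fin_cases i₁ <;> fin_cases i₂ <;> fin_cases j₁ <;> fin_cases j₂ <;>
    simp [adTensor, adKraus, dualRailVec, dualRailMixture, dualRailFrame, gridDiagonal, mul_apply,
      Fintype.sum_prod_type, finProdFinEquiv] <;>
    grind [I_sq]

lemma re_dualRailMixture (a b x y : ℝ) :
    (1 / 2 : ℂ) • (dualRailMixture a b x y + (dualRailMixture a b x y)ᵀ)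
      = gridDiagonal !![x, y * a ^ 2; y * b ^ 2, 0] := by
  ext ⟨i₁, i₂⟩ ⟨j₁, j₂⟩
  fin_cases i₁ <;> fin_cases i₂ <;> fin_cases j₁ <;> fin_cases j₂ <;>
    simp [dualRailMixture, dualRailFrame, gridDiagonal, mul_apply, Fintype.sum_prod_type,
      finProdFinEquiv] <;>
    grind [I_sq]

lemma vnEntropy_gridDiagonal (w : Matrix (Fin 2) (Fin 2) ℝ) :
    vnEntropy (gridDiagonal w) = -∑ i, ∑ j, w i j * Real.logb 2 (w i j) := by
  rw [gridDiagonal, vnEntropy_diagonal fun q : Fin 2 × Fin 2 => w q.1 q.2, Fintype.sum_prod_type]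

lemma vnEntropy_dualRailMixture {a b : ℝ} (hab : a ^ 2 + b ^ 2 = 1) (x y : ℝ) :
    vnEntropy (dualRailMixture a b x y) = -(x * Real.logb 2 x + y * Real.logb 2 y) := by
  rw [dualRailMixture, gridDiagonal,
    vnEntropy_unitary_conj_diagonal (dualRailFrame_mem_unitaryGroup hab)]
  simp [Fintype.sum_prod_type]

lemma Fr_dualRailMixture {a b : ℝ} (hab : a ^ 2 + b ^ 2 = 1) (x y : ℝ) :
    Fr (dualRailMixture a b x y) = y * Real.logb 2 y - y * a ^ 2 * Real.logb 2 (y * a ^ 2)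
      - y * b ^ 2 * Real.logb 2 (y * b ^ 2) := by
  rw [Fr, re_dualRailMixture, vnEntropy_gridDiagonal, vnEntropy_dualRailMixture hab]
  simp only [of_apply, cons_val', cons_val_fin_one, Fin.sum_univ_two, cons_val_zero, cons_val_one,
    Real.logb_zero, mul_zero, add_zero]
  ring

end DualRail

/-- decay of the relative entropy of imaginarity for a dual-rail two-qubit
state under the amplitude damping channel. -/
theorem decay_dual_rail_ad_relEnt (A γ : ℝ) (hA0 : 0 < A) (hA1 : A < 1)
    (hγ0 : 0 < γ) (hγ1 : γ < 1) :
    Fr (Matrix.of fun i j => dualRail A i * (starRingEnd ℂ) (dualRail A j))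
      - Fr (adTensor γ (Matrix.of fun i j => dualRail A i * (starRingEnd ℂ) (dualRail A j)))
      = -((1 + A) / 2) * Real.logb 2 (1 + A) - ((1 - A) / 2) * Real.logb 2 (1 - A)
        - (1 - γ) * Real.logb 2 (1 - γ) + γ
        + ((1 - γ) * (1 + A) / 2) * Real.logb 2 ((1 - γ) * (1 + A))
        + ((1 - γ) * (1 - A) / 2) * Real.logb 2 ((1 - γ) * (1 - A)) := by
  have ha : √((1 + A) / 2) ^ 2 = (1 + A) / 2 := Real.sq_sqrt (by linarith)
  have hb : √((1 - A) / 2) ^ 2 = (1 - A) / 2 := Real.sq_sqrt (by linarith)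
  have hab : √((1 + A) / 2) ^ 2 + √((1 - A) / 2) ^ 2 = 1 := by rw [ha, hb]; ring
  rw [dualRail_eq_dualRailVec, adTensor_pure_dualRailVec hab hγ0.le hγ1.le,
    pure_dualRailVec_eq_dualRailMixture, Fr_dualRailMixture hab, Fr_dualRailMixture hab, ha, hb]
  simp only [one_mul, Real.logb_one, mul_zero, mul_div_assoc', div_two_mul_logb_div_two]
  ring
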